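/- Let G be a connected graph with adjacency matrix A, eigenvalues λ₁ ≥ ⋯ ≥ λₙ, λ = max{|λ₂|,|λₙ|}, and normalized Perron eigenvector ν. For S, T ⊆ V define b̃*_{ST} = Σ_{u∈S, v∈T} a_{uv} ν_u ν_v and ρ(S) = Σ_{u∈S} ν_u e_u. Then |b̃*_{ST} − λ₁‖ρ(S)‖²‖ρ(T)‖²| ≤ λ·‖ρ(S)‖‖ρ(T)‖‖ρ(V∖S)‖‖ρ(V∖T)‖. -/
import Mathlib


open Matrix Finset

/-- **Weighted Expander Mixing Lemma with Perron weights** (Theorem 14 of the paper):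
`|b̃*_{ST} − λ₁‖ρ(S)‖²‖ρ(T)‖²| ≤ λ‖ρ(S)‖‖ρ(T)‖‖ρ(V∖S)‖‖ρ(V∖T)‖`,
where `b̃*_{ST} = ∑_{u∈S,v∈T} A u v * ν u * ν v` and `‖ρ(S)‖² = ∑_{u∈S} ν u ^ 2`. -/
theorem weighted_expander_mixing {n : ℕ} (hn : 2 ≤ n)
    (G : SimpleGraph (Fin n)) [DecidableRel G.Adj] (hG : G.Connected)
    (A : Matrix (Fin n) (Fin n) ℝ) (hA : A = G.adjMatrix ℝ)
    (hAH : A.IsHermitian)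
    (lam : Fin n → ℝ) (hmono : Antitone lam)
    (heig : ∃ e : Fin n ≃ Fin n, ∀ i, lam i = hAH.eigenvalues (e i))
    (ν : Fin n → ℝ) (hνpos : ∀ i, 0 < ν i) (hνnorm : ∑ i, ν i ^ 2 = 1)
    (hνeig : A *ᵥ ν = lam ⟨0, by omega⟩ • ν)
    (lamAbs : ℝ)
    (hlamAbs : lamAbs = max |lam ⟨1, by omega⟩| |lam ⟨n - 1, by omega⟩|)
    (S T : Finset (Fin n)) :
    |(∑ u ∈ S, ∑ v ∈ T, A u v * ν u * ν v)
      - lam ⟨0, by omega⟩ * (∑ u ∈ S, ν u ^ 2) * (∑ v ∈ T, ν v ^ 2)|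
      ≤ lamAbs * Real.sqrt (∑ u ∈ S, ν u ^ 2) * Real.sqrt (∑ v ∈ T, ν v ^ 2) *
        Real.sqrt (∑ u ∈ Sᶜ, ν u ^ 2) * Real.sqrt (∑ v ∈ Tᶜ, ν v ^ 2) := by
  classical
  obtain ⟨σ, hσ⟩ := heig
  have hspec : A = (hAH.eigenvectorUnitary : Matrix (Fin n) (Fin n) ℝ)
      * diagonal hAH.eigenvalues * star (hAH.eigenvectorUnitary : Matrix (Fin n) (Fin n) ℝ) := by
    simpa using hAH.spectral_theorem
  have hUU : (hAH.eigenvectorUnitary : Matrix (Fin n) (Fin n) ℝ)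
      * star (hAH.eigenvectorUnitary : Matrix (Fin n) (Fin n) ℝ) = 1 :=
    Matrix.mem_unitaryGroup_iff.mp hAH.eigenvectorUnitary.2
  have hUU' : star (hAH.eigenvectorUnitary : Matrix (Fin n) (Fin n) ℝ)
      * (hAH.eigenvectorUnitary : Matrix (Fin n) (Fin n) ℝ) = 1 :=
    Matrix.mem_unitaryGroup_iff'.mp hAH.eigenvectorUnitary.2
  set U : Matrix (Fin n) (Fin n) ℝ := (hAH.eigenvectorUnitary : Matrix (Fin n) (Fin n) ℝ)
    with hUdef
  set μ : Fin n → ℝ := hAH.eigenvalues with hμdef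
  set lam0 : ℝ := lam ⟨0, by omega⟩ with hlam0def
  have hT : star U = Uᵀ := by
    rw [Matrix.star_eq_conjTranspose, conjTranspose_eq_transpose_of_trivial]
  have hdot : ∀ p q : Fin n → ℝ, (star U *ᵥ p) ⬝ᵥ (star U *ᵥ q) = p ⬝ᵥ q := by
    intro p q
    rw [hT, mulVec_transpose, mulVec_transpose, ← mulVec_transpose U q,
      dotProduct_mulVec, vecMul_vecMul, ← hT, hUU, vecMul_one]
  set x : Fin n → ℝ := fun u => if u ∈ S then ν u else 0 with hxdef
  set y : Fin n → ℝ := fun u => if u ∈ T then ν u else 0 with hydef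
  set a : Fin n → ℝ := star U *ᵥ x with hadef
  set b : Fin n → ℝ := star U *ᵥ y with hbdef
  set c : Fin n → ℝ := star U *ᵥ ν with hcdef
  set α : ℝ := ∑ u ∈ S, ν u ^ 2 with hαdef
  set β : ℝ := ∑ v ∈ T, ν v ^ 2 with hβdef
  -- eigen relation in coordinates
  have hDc : ∀ i, μ i * c i = lam0 * c i := by
    have h2 : star U * A = diagonal μ * star U := by
      rw [hspec, ← mul_assoc, ← mul_assoc, hUU', one_mul]
    have h1 : diagonal μ *ᵥ c = lam0 • c := by
      calc diagonal μ *ᵥ c = (diagonal μ * star U) *ᵥ ν := by rw [hcdef, mulVec_mulVec]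
        _ = (star U * A) *ᵥ ν := by rw [h2]
        _ = star U *ᵥ (A *ᵥ ν) := by rw [mulVec_mulVec]
        _ = star U *ᵥ (lam0 • ν) := by rw [hνeig]
        _ = lam0 • c := by rw [mulVec_smul]
    intro i
    have := congrFun h1 i
    simpa [mulVec_diagonal] using this
  have hite : ∀ (W : Finset (Fin n)) (f : Fin n → ℝ),
      ∑ u, (if u ∈ W then f u else 0) = ∑ u ∈ W, f u := by
    intro W f; simp [Finset.sum_ite_mem]
  -- dot product facts
  have hxν : x ⬝ᵥ ν = α := by
    rw [hαdef, dotProduct, ← hite S fun u => ν u ^ 2]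
    refine Finset.sum_congr rfl fun u _ => ?_
    simp only [hxdef]; split_ifs <;> ring
  have hyν : y ⬝ᵥ ν = β := by
    rw [hβdef, dotProduct, ← hite T fun u => ν u ^ 2]
    refine Finset.sum_congr rfl fun u _ => ?_
    simp only [hydef]; split_ifs <;> ring
  have hxx : x ⬝ᵥ x = α := by
    rw [hαdef, dotProduct, ← hite S fun u => ν u ^ 2]
    refine Finset.sum_congr rfl fun u _ => ?_
    simp only [hxdef]; split_ifs <;> ring
  have hyy : y ⬝ᵥ y = β := by
    rw [hβdef, dotProduct, ← hite T fun u => ν u ^ 2]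
    refine Finset.sum_congr rfl fun u _ => ?_
    simp only [hydef]; split_ifs <;> ring
  have hνν : ν ⬝ᵥ ν = 1 := by
    rw [dotProduct, ← hνnorm]
    exact Finset.sum_congr rfl fun i _ => by ring
  have hac : a ⬝ᵥ c = α := by rw [hadef, hcdef, hdot, hxν]
  have haa : a ⬝ᵥ a = α := by rw [hadef, hdot, hxx]
  have hbc : b ⬝ᵥ c = β := by rw [hbdef, hcdef, hdot, hyν]
  have hbb : b ⬝ᵥ b = β := by rw [hbdef, hdot, hyy]
  have hcc : c ⬝ᵥ c = 1 := by rw [hcdef, hdot, hνν]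
  -- the bilinear form in coordinates
  have hmain : x ⬝ᵥ (A *ᵥ y) = ∑ i, μ i * (a i * b i) := by
    rw [hspec, ← mulVec_mulVec, ← mulVec_mulVec, dotProduct_mulVec,
      show x ᵥ* U = a from by rw [hadef, hT, mulVec_transpose], dotProduct]
    exact Finset.sum_congr rfl fun i _ => by rw [mulVec_diagonal]; ring
  have hinner : ∀ u, (A *ᵥ y) u = ∑ v ∈ T, A u v * ν v := by
    intro u
    rw [mulVec, dotProduct, ← hite T fun v => A u v * ν v]
    refine Finset.sum_congr rfl fun v _ => ?_
    simp only [hydef]; split_ifs <;> simp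
  have hLHS : x ⬝ᵥ (A *ᵥ y) = ∑ u ∈ S, ∑ v ∈ T, A u v * ν u * ν v := by
    rw [dotProduct, ← hite S fun u => ∑ v ∈ T, A u v * ν u * ν v]
    refine Finset.sum_congr rfl fun u _ => ?_
    rw [hinner]
    simp only [hxdef]
    split_ifs with hu
    · rw [Finset.mul_sum]; exact Finset.sum_congr rfl fun v _ => by ring
    · simp
  set d : Fin n → ℝ := fun i => a i - α * c i with hddef
  set e' : Fin n → ℝ := fun i => b i - β * c i with hedef
  have hkey : ∀ i, μ i * (d i * e' i) = μ i * (a i * b i)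
      - lam0 * (β * (c i * a i) + α * (c i * b i) - α * β * (c i * c i)) := by
    intro i
    have h := hDc i
    simp only [hddef, hedef]
    linear_combination (-(β * a i) - α * b i + α * β * c i) * h
  have hsum1 : ∑ i, μ i * (d i * e' i) = (∑ i, μ i * (a i * b i)) - lam0 * α * β := by
    rw [Finset.sum_congr rfl fun i _ => hkey i, Finset.sum_sub_distrib, ← Finset.mul_sum]
    congr 1
    have e1 : ∑ i, (β * (c i * a i) + α * (c i * b i) - α * β * (c i * c i))
        = β * (∑ i, c i * a i) + α * (∑ i, c i * b i) - α * β * (∑ i, c i * c i) := by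
      rw [Finset.sum_sub_distrib, Finset.sum_add_distrib, ← Finset.mul_sum, ← Finset.mul_sum,
        ← Finset.mul_sum]
    have e2 : ∑ i, c i * a i = α := by
      rw [← hac, dotProduct]; exact Finset.sum_congr rfl fun i _ => by ring
    have e3 : ∑ i, c i * b i = β := by
      rw [← hbc, dotProduct]; exact Finset.sum_congr rfl fun i _ => by ring
    rw [e1, e2, e3, show ∑ i, c i * c i = 1 from hcc]
    ring
  -- norms of the orthogonal components
  have hdd : ∑ i, d i ^ 2 = α * (1 - α) := by
    calc ∑ i, d i ^ 2
        = ∑ i, (a i * a i - 2 * α * (a i * c i) + α ^ 2 * (c i * c i)) :=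
          Finset.sum_congr rfl fun i _ => by simp only [hddef]; ring
      _ = (∑ i, a i * a i) - 2 * α * (∑ i, a i * c i) + α ^ 2 * (∑ i, c i * c i) := by
          rw [Finset.sum_add_distrib, Finset.sum_sub_distrib, ← Finset.mul_sum, ← Finset.mul_sum]
      _ = α * (1 - α) := by
          rw [show ∑ i, a i * a i = α from haa, show ∑ i, a i * c i = α from hac,
            show ∑ i, c i * c i = 1 from hcc]
          ring
  have hee : ∑ i, e' i ^ 2 = β * (1 - β) := by
    calc ∑ i, e' i ^ 2
        = ∑ i, (b i * b i - 2 * β * (b i * c i) + β ^ 2 * (c i * c i)) :=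
          Finset.sum_congr rfl fun i _ => by simp only [hedef]; ring
      _ = (∑ i, b i * b i) - 2 * β * (∑ i, b i * c i) + β ^ 2 * (∑ i, c i * c i) := by
          rw [Finset.sum_add_distrib, Finset.sum_sub_distrib, ← Finset.mul_sum, ← Finset.mul_sum]
      _ = β * (1 - β) := by
          rw [show ∑ i, b i * b i = β from hbb, show ∑ i, b i * c i = β from hbc,
            show ∑ i, c i * c i = 1 from hcc]
          ring
  -- complement sums
  have hSc : ∑ u ∈ Sᶜ, ν u ^ 2 = 1 - α := by
    have h := Finset.sum_add_sum_compl S (fun u => ν u ^ 2)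
    rw [hνnorm] at h
    linarith [h]
  have hTc : ∑ v ∈ Tᶜ, ν v ^ 2 = 1 - β := by
    have h := Finset.sum_add_sum_compl T (fun u => ν u ^ 2)
    rw [hνnorm] at h
    linarith [h]
  have hα0 : 0 ≤ α := Finset.sum_nonneg fun u _ => sq_nonneg _
  have hβ0 : 0 ≤ β := Finset.sum_nonneg fun u _ => sq_nonneg _
  have hlnn : 0 ≤ lamAbs := by
    rw [hlamAbs]; exact le_trans (abs_nonneg _) (le_max_left _ _)
  -- eigenvalue bounds
  have hlam_le : ∀ k : Fin n, k.val ≠ 0 → |lam k| ≤ lamAbs := by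
    intro k hk
    have h1 : lam k ≤ lam ⟨1, by omega⟩ := hmono (by rw [Fin.le_def]; simp; omega)
    have h2 : lam ⟨n - 1, by omega⟩ ≤ lam k := hmono (by rw [Fin.le_def]; simp; omega)
    rw [hlamAbs]
    rcases le_total 0 (lam k) with h | h
    · rw [abs_of_nonneg h]
      exact le_trans (le_trans h1 (le_abs_self _)) (le_max_left _ _)
    · rw [abs_of_nonpos h]
      exact le_trans (le_trans (neg_le_neg h2) (neg_le_abs _)) (le_max_right _ _)
  have hmu : ∀ i, d i ≠ 0 → |μ i| ≤ lamAbs := by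
    intro i hdi
    by_cases h0 : μ i = lam0
    · by_cases hex : ∃ j, j ≠ i ∧ μ j = lam0
      · obtain ⟨j, hji, hj⟩ := hex
        have hk1 : lam (σ.symm i) = lam0 := by
          rw [hσ (σ.symm i), Equiv.apply_symm_apply]; exact h0
        have hk2 : lam (σ.symm j) = lam0 := by
          rw [hσ (σ.symm j), Equiv.apply_symm_apply]; exact hj
        have hne : σ.symm j ≠ σ.symm i := fun h => hji (σ.symm.injective h)
        obtain ⟨k, hk1', hk2'⟩ : ∃ k : Fin n, 1 ≤ k.val ∧ lam k = lam0 := by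
          rcases Nat.eq_zero_or_pos (σ.symm i).val with hz | hp
          · refine ⟨σ.symm j, ?_, hk2⟩
            have : (σ.symm j).val ≠ (σ.symm i).val := fun h => hne (Fin.ext h)
            omega
          · exact ⟨σ.symm i, hp, hk1⟩
        have hstep : lam ⟨1, by omega⟩ = lam0 := by
          have ha' : lam ⟨1, by omega⟩ ≤ lam0 := by
            rw [hlam0def]
            exact hmono (by rw [Fin.le_def]; simp)
          have hb' : lam0 ≤ lam ⟨1, by omega⟩ := by
            rw [← hk2']
            exact hmono (by rw [Fin.le_def]; simpa using hk1')
          linarith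
        calc |μ i| = |lam ⟨1, by omega⟩| := by rw [h0, hstep]
          _ ≤ lamAbs := by rw [hlamAbs]; exact le_max_left _ _
      · push_neg at hex
        exfalso
        apply hdi
        have hcz : ∀ j, j ≠ i → c j = 0 := by
          intro j hj
          have h := hDc j
          have h' : (μ j - lam0) * c j = 0 := by linear_combination h
          rcases mul_eq_zero.mp h' with h'' | h''
          · exact absurd (by linarith) (hex j hj)
          · exact h''
        have hsingle : ∀ (f : Fin n → ℝ), (∀ j, j ≠ i → f j = 0) →
            ∑ j, f j = f i := by
          intro f hf
          exact Finset.sum_eq_single_of_mem i (Finset.mem_univ i)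
            (fun j _ hj => hf j hj)
        have hci : c i * c i = 1 := by
          rw [← show ∑ j, c j * c j = c i * c i from
            hsingle (fun j => c j * c j) (fun j hj => by simp [hcz j hj])]
          exact hcc
        have hai : α = a i * c i := by
          rw [← hac]
          exact hsingle (fun j => a j * c j) (fun j hj => by simp [hcz j hj])
        show a i - α * c i = 0
        rw [hai]
        linear_combination (-(a i)) * hci
    · have h := hσ (σ.symm i)
      rw [Equiv.apply_symm_apply] at h
      have hne : (σ.symm i).val ≠ 0 := by
        intro hz
        apply h0
        rw [← h, hlam0def]
        congr 1
        exact Fin.ext hz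
      rw [← h]
      exact hlam_le _ hne
  -- assembly
  rw [hSc, hTc]
  calc |(∑ u ∈ S, ∑ v ∈ T, A u v * ν u * ν v) - lam0 * α * β|
      = |∑ i, μ i * (d i * e' i)| := by rw [hsum1, ← hLHS, hmain]
    _ ≤ ∑ i, |μ i * (d i * e' i)| := Finset.abs_sum_le_sum_abs _ _
    _ ≤ ∑ i, lamAbs * (|d i| * |e' i|) := by
        refine Finset.sum_le_sum fun i _ => ?_
        rw [abs_mul, abs_mul]
        by_cases hdi : d i = 0
        · simp [hdi]
        · exact mul_le_mul_of_nonneg_right (hmu i hdi) (by positivity)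
    _ = lamAbs * ∑ i, |d i| * |e' i| := by rw [Finset.mul_sum]
    _ ≤ lamAbs * (Real.sqrt (∑ i, |d i| ^ 2) * Real.sqrt (∑ i, |e' i| ^ 2)) := by
        exact mul_le_mul_of_nonneg_left (Real.sum_mul_le_sqrt_mul_sqrt _ _ _) hlnn
    _ = lamAbs * (Real.sqrt (α * (1 - α)) * Real.sqrt (β * (1 - β))) := by
        rw [show ∑ i, |d i| ^ 2 = α * (1 - α) from by
            rw [← hdd]; exact Finset.sum_congr rfl fun i _ => sq_abs _,
          show ∑ i, |e' i| ^ 2 = β * (1 - β) from by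
            rw [← hee]; exact Finset.sum_congr rfl fun i _ => sq_abs _]
    _ = lamAbs * Real.sqrt α * Real.sqrt β * Real.sqrt (1 - α) * Real.sqrt (1 - β) := by
        rw [Real.sqrt_mul hα0, Real.sqrt_mul hβ0]
        ring
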